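/- arXiv:1102.4564 — 5 statements merged into one kernel-verified Lean document; each statement's English description precedes it below -/
import Mathlib

section
/- If X is a Hausdorff topological space with Lindelöf number L(X) ≤ κ and tightness t(X) ≤ κ (κ infinite), then every free sequence in X has length at most κ; i.e., F(X) ≤ L(X)·t(X). -/
/-!
Suppose `f` is a free sequence of length `κ⁺`. Since `L(X) ≤ κ`, some point `p` is a complete
accumulation point of `f`: each of its neighbourhoods contains `κ⁺` terms. By `t(X) ≤ κ`, `p` lies
in the closure of at most `κ` terms, which are bounded by some index `b` since `κ⁺` is regular.
Freeness at `b` yields a neighbourhood of `p` missing the tail from `b` on, so it contains at most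
`|b| ≤ κ` terms, a contradiction.
-/

open Cardinal Set

universe u

/-- Every open cover (by opens of `X`) of the subset `Y` has a subcover of size `≤ κ`
(i.e. the Lindelöf number of the subspace `Y` is at most `κ`). -/
def LindelofLE {X : Type u} [TopologicalSpace X] (Y : Set X) (κ : Cardinal.{u}) : Prop :=
  ∀ U : Set (Set X), (∀ u ∈ U, IsOpen u) → Y ⊆ ⋃₀ U →
    ∃ V ⊆ U, #V ≤ κ ∧ Y ⊆ ⋃₀ V

/-- The tightness of `X` is at most `κ`. -/
def TightnessLE (X : Type u) [TopologicalSpace X] (κ : Cardinal.{u}) : Prop :=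
  ∀ (A : Set X) (x : X), x ∈ closure A → ∃ B ⊆ A, #B ≤ κ ∧ x ∈ closure B

/-- A family indexed by a linear order is a free sequence: for every cut point `b`,
the closure of the initial segment is disjoint from the closure of the tail. -/
def IsFreeSequence {X : Type u} [TopologicalSpace X] {α : Type u} [LinearOrder α]
    (f : α → X) : Prop :=
  ∀ b : α, Disjoint (closure (f '' {a | a < b})) (closure (f '' {a | b ≤ a}))

namespace IsFreeSequence

variable {X : Type u} [TopologicalSpace X] {α : Type u} [LinearOrder α] {f : α → X}

theorem injective (hf : IsFreeSequence f) : Function.Injective f := by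
  refine .of_lt_imp_ne fun a b hab heq => ?_
  exact disjoint_left.mp (hf b) (subset_closure ⟨a, hab, rfl⟩)
    (heq ▸ subset_closure ⟨b, le_rfl, rfl⟩)

theorem comp_strictMono {γ : Type u} [LinearOrder γ] (hf : IsFreeSequence f) {g : γ → α}
    (hg : StrictMono g) : IsFreeSequence (f ∘ g) := by
  intro b
  refine (hf (g b)).mono (closure_mono ?_) (closure_mono ?_)
  · rintro _ ⟨a, ha, rfl⟩
    exact ⟨g a, hg ha, rfl⟩
  · rintro _ ⟨a, ha, rfl⟩
    exact ⟨g a, hg.monotone ha, rfl⟩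

end IsFreeSequence

theorem exists_forall_lt_of_mk_lt_cof {o : Ordinal.{u}} {s : Set o.ToType} (hs : #s < o.cof) :
    ∃ b, ∀ a ∈ s, a < b :=
  not_isCofinal_iff.1 fun hcof => (Order.cof_le hcof).not_gt (by rwa [Ordinal.cof_toType])

theorem mk_Iio_toType_ord_succ_le {κ : Cardinal.{u}} (b : (Order.succ κ).ord.ToType) :
    #(Iio b) ≤ κ :=
  Order.lt_succ_iff.1 (by simpa using mk_Iio_lt b)

open Ordinal in
theorem exists_strictMono_toType_ord {α : Type u} [LinearOrder α] [WellFoundedLT α]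
    {c : Cardinal.{u}} (hc : c ≤ #α) : ∃ g : c.ord.ToType → α, StrictMono g := by
  have hle : typeLT c.ord.ToType ≤ typeLT α := by
    rwa [type_toType, ord_le, card_type]
  obtain ⟨g⟩ := type_le_iff'.1 hle
  exact ⟨g, fun _ _ h => g.map_rel_iff.2 h⟩

section

variable {X : Type u} [TopologicalSpace X] {κ : Cardinal.{u}}

theorem LindelofLE.exists_forall_isOpen_lt_mk_preimage (hκ : ℵ₀ ≤ κ)
    (hL : LindelofLE (univ : Set X) κ) {β : Type u} (f : β → X) (hβ : κ < #β) :
    ∃ p, ∀ u, IsOpen u → p ∈ u → κ < #(f ⁻¹' u) := by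
  by_contra! h
  obtain ⟨V, hVU, hVκ, hVcov⟩ := hL {u | IsOpen u ∧ #(f ⁻¹' u) ≤ κ} (fun u hu => hu.1)
    fun x _ => by
      obtain ⟨u, hu, hxu, hsmall⟩ := h x
      exact ⟨u, ⟨hu, hsmall⟩, hxu⟩
  have hcov : (univ : Set β) ⊆ ⋃ v : V, f ⁻¹' v := fun a _ => by
    obtain ⟨u, huV, hau⟩ := hVcov (mem_univ (f a))
    exact mem_iUnion.2 ⟨⟨u, huV⟩, hau⟩
  refine hβ.not_ge ?_
  calc #β = #(univ : Set β) := mk_univ.symm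
    _ ≤ #(⋃ v : V, f ⁻¹' v) := mk_le_mk_of_subset hcov
    _ ≤ #V * ⨆ v : V, #(f ⁻¹' v) := mk_iUnion_le _
    _ ≤ κ * κ := mul_le_mul' hVκ (ciSup_le' fun v => (hVU v.2).2)
    _ = κ := mul_eq_self hκ

theorem TightnessLE.exists_mem_closure_image_Iio (hκ : ℵ₀ ≤ κ) (ht : TightnessLE X κ)
    {f : (Order.succ κ).ord.ToType → X} (hf : Function.Injective f) {p : X}
    (hp : p ∈ closure (range f)) : ∃ b, p ∈ closure (f '' Iio b) := by
  obtain ⟨B, hBf, hBκ, hpB⟩ := ht _ p hp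
  have hcof : #(f ⁻¹' B) < (Order.succ κ).ord.cof := by
    rw [(isRegular_succ hκ).cof_ord]
    exact ((mk_preimage_of_injective f B hf).trans hBκ).trans_lt (Order.lt_succ κ)
  obtain ⟨b, hb⟩ := exists_forall_lt_of_mk_lt_cof hcof
  refine ⟨b, closure_mono (fun x hx => ?_) hpB⟩
  obtain ⟨a, rfl⟩ := hBf hx
  exact ⟨a, hb a hx, rfl⟩

theorem not_isFreeSequence_toType_ord_succ (hκ : ℵ₀ ≤ κ) (hL : LindelofLE (univ : Set X) κ)
    (ht : TightnessLE X κ) (f : (Order.succ κ).ord.ToType → X) : ¬ IsFreeSequence f := by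
  intro hf
  obtain ⟨p, hp⟩ := hL.exists_forall_isOpen_lt_mk_preimage hκ f (by simp)
  have hp_mem : p ∈ closure (range f) := mem_closure_iff.2 fun u hu hpu => by
    obtain ⟨a, ha⟩ := mk_set_ne_zero_iff.1 (hp u hu hpu).ne_bot
    exact ⟨f a, ha, mem_range_self a⟩
  obtain ⟨b, hpb⟩ := ht.exists_mem_closure_image_Iio hκ hf.injective hp_mem
  set u := (closure (f '' Ici b))ᶜ
  have hpu : p ∈ u := (hf b).notMem_of_mem_left hpb
  have hu_sub : f ⁻¹' u ⊆ Iio b := fun a hau => mem_Iio.2 <| not_le.1 fun hba =>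
    hau (subset_closure ⟨a, hba, rfl⟩)
  exact (hp u isClosed_closure.isOpen_compl hpu).not_ge
    ((mk_le_mk_of_subset hu_sub).trans (mk_Iio_toType_ord_succ_le b))

end

theorem statement0_general {X : Type u} [TopologicalSpace X] {κ : Cardinal.{u}}
    (hκ : ℵ₀ ≤ κ) (hL : LindelofLE (Set.univ : Set X) κ) (ht : TightnessLE X κ) :
    ∀ (α : Type u) [LinearOrder α] [WellFoundedLT α] (f : α → X),
      IsFreeSequence f → #α ≤ κ := by
  intro α _ _ f hf
  by_contra! hα
  obtain ⟨g, hg⟩ := exists_strictMono_toType_ord (Order.succ_le_of_lt hα)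
  exact not_isFreeSequence_toType_ord_succ hκ hL ht (f ∘ g) (hf.comp_strictMono hg)

/-- If `X` is Hausdorff with `L(X) ≤ κ` and `t(X) ≤ κ` (`κ` infinite), then every
free sequence in `X` has length at most `κ`; i.e. `F(X) ≤ L(X)·t(X)`. -/
theorem statement0 {X : Type u} [TopologicalSpace X] [T2Space X] {κ : Cardinal.{u}}
    (hκ : ℵ₀ ≤ κ) (hL : LindelofLE (Set.univ : Set X) κ) (ht : TightnessLE X κ) :
    ∀ (α : Type u) [LinearOrder α] [WellFoundedLT α] (f : α → X),
      IsFreeSequence f → #α ≤ κ :=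
  statement0_general hκ hL ht
end

section
/- If X is a topological space with Lindelöf number at most κ (κ infinite), then every subset of X of cardinality κ⁺ has a complete accumulation point in X. -/
open Cardinal Set

universe u

/-- If `L(X) ≤ κ` (`κ` infinite), then every subset of `X` of cardinality `κ⁺` has a
complete accumulation point in `X`. -/
theorem statement1 {X : Type u} [TopologicalSpace X] {κ : Cardinal.{u}} (hκ : ℵ₀ ≤ κ)
    (hL : LindelofLE (Set.univ : Set X) κ) (A : Set X) (hA : #A = Order.succ κ) :
    ∃ x : X, ∀ U : Set X, IsOpen U → x ∈ U → #↥(U ∩ A) = #↥A := by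
  by_contra h
  push_neg at h
  -- The family of open sets meeting A in a small set
  set 𝒰 : Set (Set X) := {u | IsOpen u ∧ #↥(u ∩ A) ≤ κ} with h𝒰
  have hcover : (Set.univ : Set X) ⊆ ⋃₀ 𝒰 := by
    intro x _
    obtain ⟨U, hUopen, hxU, hUne⟩ := h x
    refine ⟨U, ⟨hUopen, ?_⟩, hxU⟩
    have hle : #↥(U ∩ A) ≤ #↥A := mk_le_mk_of_subset (inter_subset_right)
    rw [hA] at hle hUne
    exact (Order.lt_succ_iff_of_not_isMax (not_isMax κ)).mp (lt_of_le_of_ne hle hUne)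
  obtain ⟨V, hVsub, hVcard, hVcover⟩ := hL 𝒰 (fun u hu => hu.1) hcover
  have hAsub : A ⊆ ⋃ v : V, ((v : Set X) ∩ A) := by
    intro a ha
    obtain ⟨v, hv, hav⟩ := hVcover (mem_univ a)
    exact mem_iUnion.mpr ⟨⟨v, hv⟩, hav, ha⟩
  have h1 : #↥A ≤ #↥(⋃ v : V, ((v : Set X) ∩ A)) := mk_le_mk_of_subset hAsub
  have h2 : #↥(⋃ v : V, ((v : Set X) ∩ A)) ≤ #↥V * ⨆ v : V, #↥((v : Set X) ∩ A) :=
    mk_iUnion_le _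
  have h3 : (⨆ v : V, #↥((v : Set X) ∩ A)) ≤ κ :=
    ciSup_le' fun v => (hVsub v.2).2
  have h4 : #↥A ≤ κ := by
    calc #↥A ≤ #↥V * ⨆ v : V, #↥((v : Set X) ∩ A) := h1.trans h2
      _ ≤ κ * κ := mul_le_mul' hVcard h3
      _ = κ := mul_eq_self hκ
  rw [hA] at h4
  exact absurd h4 (not_le.mpr (Order.lt_succ_of_not_isMax (not_isMax κ)))
end

section
/- For a Hausdorff space X and infinite cardinal κ: if L(X \ {x}) ≤ κ for some x ∈ X, then the pseudocharacter ψ(x, X) ≤ κ. (Half of the identity Φ(X) = L(X)·ψ(X).) -/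
open Cardinal Set

universe u

/-- For a Hausdorff `X` and infinite `κ`: if `L(X \ {x}) ≤ κ` then `ψ(x, X) ≤ κ`,
i.e. there is a family of at most `κ` open sets whose intersection is exactly `{x}`. -/
theorem statement3 {X : Type u} [TopologicalSpace X] [T2Space X] {κ : Cardinal.{u}}
    (hκ : ℵ₀ ≤ κ) (x : X) (hL : LindelofLE ({x}ᶜ : Set X) κ) :
    ∃ U : Set (Set X), (∀ u ∈ U, IsOpen u) ∧ #U ≤ κ ∧ ⋂₀ U = {x} := by
  set C : Set (Set X) := {u | IsOpen u ∧ x ∉ closure u} with hC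
  have hcov : ({x}ᶜ : Set X) ⊆ ⋃₀ C := by
    intro y hy
    obtain ⟨u, v, hu, hv, hyu, hxv, hdisj⟩ := t2_separation hy
    refine ⟨u, ⟨hu, fun hx => ?_⟩, hyu⟩
    have : x ∈ closure vᶜ :=
      closure_mono (fun z hz => Set.disjoint_left.mp hdisj hz) hx
    rw [hv.isClosed_compl.closure_eq] at this
    exact this hxv
  obtain ⟨V, hVC, hVcard, hVcov⟩ := hL C (fun u hu => hu.1) hcov
  refine ⟨(fun v => (closure v)ᶜ) '' V, ?_, ?_, ?_⟩
  · rintro _ ⟨v, hv, rfl⟩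
    exact isClosed_closure.isOpen_compl
  · exact le_trans mk_image_le hVcard
  · ext y
    simp only [mem_sInter, mem_singleton_iff]
    constructor
    · intro h
      by_contra hy
      obtain ⟨v, hvV, hyv⟩ := hVcov hy
      exact h _ ⟨v, hvV, rfl⟩ (subset_closure hyv)
    · rintro rfl _ ⟨v, hvV, rfl⟩
      exact (hVC hvV).2
end

section
/- For any Hausdorff space X and infinite cardinal κ, if L(X) ≤ κ, ψ(X) ≤ κ, and F(X) ≤ κ, then |X| ≤ 2^κ. -/
open Cardinal Set

universe u

/-!
In a Hausdorff space with `L(X) ≤ κ` and `ψ(X) ≤ κ`, every point `x` has at most `κ` open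
neighbourhoods whose closures meet in `{x}`; hence a point of the closure of a set `B` is
determined by the traces of these neighbourhoods on `B`, and `|cl B| ≤ 2^κ` when `|B| ≤ κ`.
A closing-off argument of length `κ⁺` yields `A ⊆ X` with `|A| ≤ 2^κ` that contains the
closures of its subsets of size `≤ κ` and is not covered by `κ` of the neighbourhoods of its
points unless these cover `X`. If some `z ∉ A`, one chooses recursively `x_ξ ∈ A` outside
covers of `cl {x_η | η < ζ}`, `ζ ≤ ξ`, by `κ` such neighbourhoods missing `z` (Lindelöf); the
result is a free sequence of length `κ⁺`, contradicting `F(X) ≤ κ`.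
-/

theorem mk_iUnion_le_of_forall_le {α ι : Type u} {c : Cardinal.{u}} (hc : ℵ₀ ≤ c)
    {f : ι → Set α} (hι : #ι ≤ c) (hf : ∀ i, #(f i) ≤ c) : #(⋃ i, f i) ≤ c :=
  (mk_iUnion_le f).trans (mul_le_of_le hc hι (ciSup_le' hf))

theorem mk_biUnion_le_of_forall_le {α ι : Type u} {c : Cardinal.{u}} (hc : ℵ₀ ≤ c)
    {s : Set ι} {f : ι → Set α} (hs : #s ≤ c) (hf : ∀ i ∈ s, #(f i) ≤ c) :
    #(⋃ i ∈ s, f i) ≤ c := by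
  rw [biUnion_eq_iUnion]
  exact mk_iUnion_le_of_forall_le hc hs fun i => hf i i.2

theorem mk_bounded_subset_le_two_power {α : Type u} {κ : Cardinal.{u}} (hκ : ℵ₀ ≤ κ)
    {s : Set α} (hs : #s ≤ 2 ^ κ) : #{t : Set α // t ⊆ s ∧ #t ≤ κ} ≤ 2 ^ κ :=
  calc #{t : Set α // t ⊆ s ∧ #t ≤ κ} ≤ max #s ℵ₀ ^ κ := mk_bounded_subset_le s κ
    _ ≤ (2 ^ κ) ^ κ := power_le_power_right (max_le hs (hκ.trans (cantor κ).le))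
    _ = 2 ^ κ := by rw [← power_mul, mul_eq_self hκ]

theorem exists_forall_lt_of_mk_lt_cof_s5 {α ι : Type u} [LinearOrder α] (g : ι → α)
    (hι : #ι < Order.cof α) : ∃ ξ, ∀ i, g i < ξ := by
  by_contra! h
  have hg : IsCofinal (range g) := fun ξ =>
    let ⟨i, hi⟩ := h ξ
    ⟨g i, mem_range_self i, hi⟩
  exact (Order.cof_le hg).not_gt (mk_range_le.trans_lt hι)

theorem mk_Iio_succ_ord_toType_le {κ : Cardinal.{u}} (ξ : (Order.succ κ).ord.ToType) :
    #(Iio ξ) ≤ κ :=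
  Order.lt_succ_iff.1 (by simpa using mk_Iio_lt ξ)

theorem cof_succ_ord_toType {κ : Cardinal.{u}} (hκ : ℵ₀ ≤ κ) :
    Order.cof (Order.succ κ).ord.ToType = Order.succ κ := by
  rw [Ordinal.cof_toType, (isRegular_succ hκ).cof_ord]

theorem exists_forall_apply_mem_of_wellFoundedLT {α β : Type*} [LT α] [WellFoundedLT α]
    [Nonempty β] (S : (α → β) → α → Set β)
    (hS : ∀ f g ξ, (∀ η < ξ, f η = g η) → S f ξ = S g ξ)
    (hne : ∀ f ξ, (∀ η < ξ, f η ∈ S f η) → (S f ξ).Nonempty) :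
    ∃ f : α → β, ∀ ξ, f ξ ∈ S f ξ := by
  classical
  let extend (ξ : α) (g : ∀ η < ξ, β) : α → β := fun η =>
    if h : η < ξ then g η h else Classical.arbitrary β
  let f : α → β := wellFounded_lt.fix fun ξ g =>
    if h : (S (extend ξ g) ξ).Nonempty then h.some else Classical.arbitrary β
  have hSf : ∀ ξ, S (extend ξ fun η _ => f η) ξ = S f ξ := fun ξ =>
    hS _ _ ξ fun η hη => dif_pos hη
  refine ⟨f, fun ξ => wellFounded_lt.induction (C := fun ξ => f ξ ∈ S f ξ) ξ fun ξ ih => ?_⟩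
  have hne' : (S (extend ξ fun η _ => f η) ξ).Nonempty := hSf ξ ▸ hne f ξ ih
  rw [← hSf ξ, show f ξ = _ from wellFounded_lt.fix_eq _ ξ, dif_pos hne']
  exact hne'.some_mem

theorem exists_closed_under_small_subsets {X : Type u} {κ : Cardinal.{u}} (hκ : ℵ₀ ≤ κ)
    (G : Set X → Set X) (hG : ∀ S : Set X, #S ≤ κ → #(G S) ≤ 2 ^ κ) :
    ∃ A : Set X, #A ≤ 2 ^ κ ∧ ∀ S ⊆ A, #S ≤ κ → G S ⊆ A := by
  have h2κ : ℵ₀ ≤ 2 ^ κ := hκ.trans (cantor κ).le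
  have hκ2κ : κ ≤ 2 ^ κ := (cantor κ).le
  obtain ⟨f, hf⟩ := exists_forall_apply_mem_of_wellFoundedLT (α := (Order.succ κ).ord.ToType)
    (fun f ξ => {T : Set X | #T ≤ 2 ^ κ ∧ ∀ S ⊆ ⋃ η ∈ Iio ξ, f η, #S ≤ κ → G S ⊆ T})
    (fun f g ξ h => by rw [iUnion₂_congr fun η (hη : η ∈ Iio ξ) => h η hη])
    (fun f ξ ih => by
      set U := ⋃ η ∈ Iio ξ, f η
      have hU : #U ≤ 2 ^ κ := mk_biUnion_le_of_forall_le h2κ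
        ((mk_Iio_succ_ord_toType_le ξ).trans hκ2κ) fun η hη => (ih η hη).1
      refine ⟨⋃ S ∈ {S | S ⊆ U ∧ #S ≤ κ}, G S, mk_biUnion_le_of_forall_le h2κ
        (mk_bounded_subset_le_two_power hκ hU) fun S hS => hG S hS.2,
        fun S hSU hS => subset_biUnion_of_mem (u := G) ⟨hSU, hS⟩⟩)
  refine ⟨⋃ ξ, f ξ, mk_iUnion_le_of_forall_le h2κ ?_ fun ξ => (hf ξ).1, fun S hSA hS => ?_⟩
  · rw [mk_toType, card_ord]
    exact Order.succ_le_of_lt (cantor κ)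
  · have hmem : ∀ s : S, ∃ ξ, s.1 ∈ f ξ := fun s => mem_iUnion.1 (hSA s.2)
    choose ξ hξ using hmem
    obtain ⟨ξ₀, hξ₀⟩ := exists_forall_lt_of_mk_lt_cof_s5 ξ
      (by rw [cof_succ_ord_toType hκ]; exact Order.lt_succ_of_le hS)
    refine ((hf ξ₀).2 S (fun s hs => ?_) hS).trans (subset_iUnion f ξ₀)
    exact mem_biUnion (hξ₀ ⟨s, hs⟩) (hξ ⟨s, hs⟩)

section Topology

variable {X : Type u} [TopologicalSpace X] {κ : Cardinal.{u}}

theorem LindelofLE.of_isClosed (hL : LindelofLE (univ : Set X) κ) {C : Set X}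
    (hC : IsClosed C) : LindelofLE C κ := by
  intro U hUo hCU
  obtain ⟨V, hVU, hV, hXV⟩ := hL (insert Cᶜ U)
    (forall_mem_insert.2 ⟨hC.isOpen_compl, hUo⟩)
    (fun x _ => by
      by_cases hx : x ∈ C
      · obtain ⟨u, hu, hxu⟩ := hCU hx
        exact ⟨u, mem_insert_of_mem _ hu, hxu⟩
      · exact ⟨Cᶜ, mem_insert _ _, hx⟩)
  refine ⟨V ∩ U, inter_subset_right, (mk_le_mk_of_subset inter_subset_left).trans hV,
    fun x hx => ?_⟩
  obtain ⟨v, hv, hxv⟩ := hXV (mem_univ x)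
  refine ⟨v, ⟨hv, (hVU hv).resolve_left ?_⟩, hxv⟩
  rintro rfl
  exact hxv hx

theorem exists_cover_notMem_closure [T2Space X] (hL : LindelofLE (univ : Set X) κ)
    {C : Set X} (hC : IsClosed C) {x : X} (hx : x ∉ C) :
    ∃ V : Set (Set X), (∀ v ∈ V, IsOpen v ∧ x ∉ closure v) ∧ #V ≤ κ ∧ C ⊆ ⋃₀ V := by
  obtain ⟨V, hVsub, hV, hCV⟩ := hL.of_isClosed hC {v | IsOpen v ∧ x ∉ closure v}
    (fun v hv => hv.1) (fun y hy => by
      obtain ⟨v, o, hv, ho, hyv, hxo, hvo⟩ := t2_separation (ne_of_mem_of_not_mem hy hx)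
      exact ⟨v, ⟨hv, fun hxv => disjoint_left.1 (hvo.closure_left ho) hxv hxo⟩, hyv⟩)
  exact ⟨V, hVsub, hV, hCV⟩

/-- A witness for the closed pseudocharacter bound `ψ_c(X) ≤ κ`. -/
structure IsClosedPseudobase (W : X → Set (Set X)) (κ : Cardinal.{u}) : Prop where
  isOpen : ∀ x, ∀ w ∈ W x, IsOpen w
  mem : ∀ x, ∀ w ∈ W x, x ∈ w
  mk_le : ∀ x, #(W x) ≤ κ
  biInter_closure : ∀ x, ⋂ w ∈ W x, closure w = {x}

theorem exists_closed_pseudobase_at [T2Space X] (hκ : ℵ₀ ≤ κ)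
    (hL : LindelofLE (univ : Set X) κ) {x : X} {U : Set (Set X)} (hUo : ∀ u ∈ U, IsOpen u)
    (hU : #U ≤ κ) (hUx : ⋂₀ U = {x}) :
    ∃ W : Set (Set X), (∀ w ∈ W, IsOpen w ∧ x ∈ w) ∧ #W ≤ κ ∧ ⋂ w ∈ W, closure w = {x} := by
  have hxU : ∀ u ∈ U, x ∈ u := fun u hu => (hUx.symm ▸ mem_singleton x : x ∈ ⋂₀ U) u hu
  have hcover (u : U) : ∃ V : Set (Set X),
      (∀ v ∈ V, IsOpen v ∧ x ∉ closure v) ∧ #V ≤ κ ∧ (u : Set X)ᶜ ⊆ ⋃₀ V :=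
    exists_cover_notMem_closure hL (hUo u u.2).isClosed_compl (not_not.2 (hxU u u.2))
  choose V hVo hV hUV using hcover
  -- `(closure v)ᶜ` is a neighbourhood of `x` whose closure `(interior (closure v))ᶜ` misses `v`
  refine ⟨(fun v => (closure v)ᶜ) '' ⋃ u, V u, ?_, mk_image_le.trans
    (mk_iUnion_le_of_forall_le hκ (by simpa using hU) hV), ?_⟩
  · rintro _ ⟨v, hv, rfl⟩
    obtain ⟨u, hvu⟩ := mem_iUnion.1 hv
    exact ⟨isClosed_closure.isOpen_compl, (hVo u v hvu).2⟩
  refine Subset.antisymm (fun p hp => ?_) ?_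
  · by_contra hpx
    obtain ⟨u, hu, hpu⟩ : ∃ u ∈ U, p ∉ u := by
      by_contra! h
      exact hpx (hUx ▸ mem_sInter.2 h)
    obtain ⟨v, hv, hpv⟩ := hUV ⟨u, hu⟩ hpu
    have hpw := mem_iInter₂.1 hp _ ⟨v, mem_iUnion.2 ⟨⟨u, hu⟩, hv⟩, rfl⟩
    rw [closure_compl] at hpw
    exact hpw (interior_maximal subset_closure (hVo _ v hv).1 hpv)
  · rintro p rfl
    exact mem_iInter₂.2 fun w hw => subset_closure (by
      obtain ⟨v, hv, rfl⟩ := hw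
      obtain ⟨u, hvu⟩ := mem_iUnion.1 hv
      exact (hVo u v hvu).2)

theorem exists_isClosedPseudobase [T2Space X] (hκ : ℵ₀ ≤ κ)
    (hL : LindelofLE (univ : Set X) κ)
    (hψ : ∀ x : X, ∃ U : Set (Set X), (∀ u ∈ U, IsOpen u) ∧ #U ≤ κ ∧ ⋂₀ U = {x}) :
    ∃ W : X → Set (Set X), IsClosedPseudobase W κ := by
  choose W hWo hW hWx using fun x => (hψ x).elim fun _ ⟨hUo, hU, hUx⟩ =>
    exists_closed_pseudobase_at hκ hL hUo hU hUx
  exact ⟨W, fun x w hw => (hWo x w hw).1, fun x w hw => (hWo x w hw).2, hW, hWx⟩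

end Topology

section ClosedPseudobase

variable {X : Type u} [TopologicalSpace X] {κ : Cardinal.{u}} {W : X → Set (Set X)}

theorem IsClosedPseudobase.mk_closure_le (hW : IsClosedPseudobase W κ) (hκ : ℵ₀ ≤ κ)
    {B : Set X} (hB : #B ≤ κ) : #(closure B) ≤ 2 ^ κ := by
  -- a point of `closure B` is recovered from the traces on `B` of its neighbourhoods in `W`
  let trace (x : closure B) : {𝒮 : Set (Set X) // 𝒮 ⊆ 𝒫 B ∧ #𝒮 ≤ κ} :=
    ⟨(· ∩ B) '' W x, image_subset_iff.2 fun _ _ => inter_subset_right,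
      mk_image_le.trans (hW.mk_le x)⟩
  have htrace (x : closure B) : ⋂ s ∈ (trace x).1, closure s = {x.1} := by
    refine Subset.antisymm ?_ (singleton_subset_iff.2 (mem_iInter₂.2 ?_))
    · rw [biInter_image, ← hW.biInter_closure x]
      exact iInter₂_mono fun w _ => closure_mono inter_subset_left
    · rintro _ ⟨w, hw, rfl⟩
      exact (hW.isOpen x w hw).inter_closure ⟨hW.mem x w hw, x.2⟩
  have hinj : Function.Injective trace := fun x y hxy =>
    Subtype.ext (singleton_eq_singleton_iff.1 (by rw [← htrace, ← htrace, hxy]))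
  refine (mk_le_of_injective hinj).trans (mk_bounded_subset_le_two_power hκ ?_)
  rw [mk_powerset]
  exact power_le_power_left two_ne_zero hB

theorem IsClosedPseudobase.exists_cover_notMem (hW : IsClosedPseudobase W κ)
    (hL : LindelofLE (univ : Set X) κ) {C : Set X} (hC : IsClosed C) {z : X} (hz : z ∉ C) :
    ∃ 𝒰 ⊆ ⋃ y ∈ C, W y, #𝒰 ≤ κ ∧ C ⊆ ⋃₀ 𝒰 ∧ z ∉ ⋃₀ 𝒰 := by
  obtain ⟨𝒰, h𝒰sub, h𝒰, hC𝒰⟩ := hL.of_isClosed hC {v ∈ ⋃ y ∈ C, W y | z ∉ v}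
    (fun v hv => by
      obtain ⟨y, -, hvy⟩ := mem_iUnion₂.1 hv.1
      exact hW.isOpen y v hvy)
    (fun y hy => by
      have hzy : z ∉ ⋂ w ∈ W y, closure w := by
        rw [hW.biInter_closure]
        exact ne_of_mem_of_not_mem hy hz |>.symm
      obtain ⟨w, hw, hzw⟩ : ∃ w ∈ W y, z ∉ closure w := by simpa using hzy
      exact ⟨w, ⟨mem_biUnion hy hw, fun h => hzw (subset_closure h)⟩, hW.mem y w hw⟩)
  refine ⟨𝒰, fun v hv => (h𝒰sub hv).1, h𝒰, hC𝒰, ?_⟩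
  rintro ⟨v, hv, hzv⟩
  exact (h𝒰sub hv).2 hzv

structure IsSaturated (W : X → Set (Set X)) (κ : Cardinal.{u}) (A : Set X) : Prop where
  closure_subset : ∀ B ⊆ A, #B ≤ κ → closure B ⊆ A
  diff_nonempty : ∀ 𝒱 ⊆ ⋃ x ∈ A, W x, #𝒱 ≤ κ → (⋃₀ 𝒱)ᶜ.Nonempty → (A \ ⋃₀ 𝒱).Nonempty

theorem IsClosedPseudobase.exists_isSaturated [Nonempty X] (hW : IsClosedPseudobase W κ)
    (hκ : ℵ₀ ≤ κ) : ∃ A : Set X, #A ≤ 2 ^ κ ∧ IsSaturated W κ A := by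
  let avoid (𝒱 : Set (Set X)) : X := Classical.epsilon fun x => x ∉ ⋃₀ 𝒱
  have h2κ : ℵ₀ ≤ 2 ^ κ := hκ.trans (cantor κ).le
  obtain ⟨A, hA, hGA⟩ := exists_closed_under_small_subsets hκ
    (fun S => closure S ∪ avoid '' 𝒫 (⋃ x ∈ S, W x))
    (fun S hS => (mk_union_le _ _).trans (add_le_of_le h2κ (hW.mk_closure_le hκ hS)
      (mk_image_le.trans (by
        rw [mk_powerset]
        exact power_le_power_left two_ne_zero
          (mk_biUnion_le_of_forall_le hκ hS fun x _ => hW.mk_le x)))))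
  refine ⟨A, hA, fun B hBA hB => subset_union_left.trans (hGA B hBA hB), ?_⟩
  intro 𝒱 h𝒱A h𝒱 h𝒱X
  have hwit : ∀ v ∈ 𝒱, ∃ x ∈ A, v ∈ W x := fun v hv => by simpa using h𝒱A hv
  choose! c hcA hcW using hwit
  have h𝒱c : 𝒱 ⊆ ⋃ x ∈ c '' 𝒱, W x := fun v hv => mem_biUnion (mem_image_of_mem c hv) (hcW v hv)
  refine ⟨avoid 𝒱, hGA (c '' 𝒱) (image_subset_iff.2 hcA) (mk_image_le.trans h𝒱)
    (subset_union_right (mem_image_of_mem avoid h𝒱c)), ?_⟩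
  exact Classical.epsilon_spec (p := fun x => x ∉ ⋃₀ 𝒱) h𝒱X

end ClosedPseudobase

theorem isFreeSequence_of_isOpen_separating {X : Type u} [TopologicalSpace X] {α : Type u}
    [LinearOrder α] {f : α → X} (O : α → Set X) (hO : ∀ b, IsOpen (O b))
    (hcl : ∀ b, closure (f '' {a | a < b}) ⊆ O b) (hf : ∀ a b, b ≤ a → f a ∉ O b) :
    IsFreeSequence f := fun b =>
  (disjoint_compl_right.mono_left (hcl b)).mono_right
    (closure_minimal (by rintro _ ⟨a, ha, rfl⟩; exact hf a b ha) (hO b).isClosed_compl)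

section Saturated

variable {X : Type u} [TopologicalSpace X] {κ : Cardinal.{u}} {W : X → Set (Set X)} {A : Set X}

theorem IsSaturated.exists_cover_closure_and_mem_diff (hA : IsSaturated W κ A)
    (hW : IsClosedPseudobase W κ) (hκ : ℵ₀ ≤ κ) (hL : LindelofLE (univ : Set X) κ) {z : X}
    (hz : z ∉ A) {P : Set X} (hPA : P ⊆ A) (hP : #P ≤ κ) {𝒱 : Set (Set X)}
    (h𝒱A : 𝒱 ⊆ ⋃ y ∈ A, W y) (h𝒱 : #𝒱 ≤ κ) (hz𝒱 : z ∉ ⋃₀ 𝒱) :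
    ∃ x ∈ A, ∃ 𝒰 ⊆ ⋃ y ∈ A, W y,
      #𝒰 ≤ κ ∧ closure P ⊆ ⋃₀ 𝒰 ∧ z ∉ ⋃₀ 𝒰 ∧ x ∉ ⋃₀ (𝒰 ∪ 𝒱) := by
  have hPcl : closure P ⊆ A := hA.closure_subset P hPA hP
  obtain ⟨𝒰, h𝒰W, h𝒰, hP𝒰, hz𝒰⟩ :=
    hW.exists_cover_notMem hL isClosed_closure fun h => hz (hPcl h)
  have h𝒰A : 𝒰 ⊆ ⋃ y ∈ A, W y := h𝒰W.trans (biUnion_subset_biUnion_left hPcl)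
  obtain ⟨x, hxA, hx⟩ := hA.diff_nonempty (𝒰 ∪ 𝒱) (union_subset h𝒰A h𝒱A)
    ((mk_union_le _ _).trans (add_le_of_le hκ h𝒰 h𝒱)) ⟨z, by simp [sUnion_union, hz𝒰, hz𝒱]⟩
  exact ⟨x, hxA, 𝒰, h𝒰A, h𝒰, hP𝒰, hz𝒰, hx⟩

theorem IsSaturated.exists_isFreeSequence (hA : IsSaturated W κ A)
    (hW : IsClosedPseudobase W κ) (hκ : ℵ₀ ≤ κ) (hL : LindelofLE (univ : Set X) κ) {z : X}
    (hz : z ∉ A) (α : Type u) [LinearOrder α] [WellFoundedLT α] (hα : ∀ ξ : α, #(Iio ξ) ≤ κ) :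
    ∃ f : α → X, IsFreeSequence f := by
  have : Nonempty X := ⟨z⟩
  -- the `ξ`-th term is a point `x_ξ ∈ A` together with a cover `𝒰_ξ` of
  -- `closure {x_η | η < ξ}` missing `z`, such that `x_ξ ∉ ⋃₀ 𝒰_η` for all `η ≤ ξ`
  obtain ⟨p, hp⟩ := exists_forall_apply_mem_of_wellFoundedLT (α := α) (β := X × Set (Set X))
    (fun p ξ => {q | q.1 ∈ A ∧ q.2 ⊆ ⋃ y ∈ A, W y ∧ #q.2 ≤ κ ∧
      closure ((fun η => (p η).1) '' Iio ξ) ⊆ ⋃₀ q.2 ∧ z ∉ ⋃₀ q.2 ∧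
      q.1 ∉ ⋃₀ (q.2 ∪ ⋃ η ∈ Iio ξ, (p η).2)})
    (fun p p' ξ h => by
      rw [image_congr fun η (hη : η ∈ Iio ξ) => congrArg Prod.fst (h η hη),
        iUnion₂_congr fun η (hη : η ∈ Iio ξ) => congrArg Prod.snd (h η hη)])
    (fun p ξ ih => by
      obtain ⟨x, hxA, 𝒰, h𝒰A, h𝒰, hP𝒰, hz𝒰, hx⟩ :=
        hA.exists_cover_closure_and_mem_diff hW hκ hL hz
        (image_subset_iff.2 fun η hη => (ih η hη).1) (mk_image_le.trans (hα ξ))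
        (iUnion₂_subset fun η hη => (ih η hη).2.1)
        (mk_biUnion_le_of_forall_le hκ (hα ξ) fun η hη => (ih η hη).2.2.1)
        (by simpa [sUnion_iUnion] using fun η hη => (ih η hη).2.2.2.2.1)
      exact ⟨(x, 𝒰), hxA, h𝒰A, h𝒰, hP𝒰, hz𝒰, hx⟩)
  refine ⟨fun ξ => (p ξ).1, isFreeSequence_of_isOpen_separating (fun ξ => ⋃₀ (p ξ).2)
    (fun ξ => isOpen_sUnion fun v hv => ?_) (fun ξ => (hp ξ).2.2.2.1) fun a b hba => ?_⟩
  · obtain ⟨y, -, hvy⟩ := mem_iUnion₂.1 ((hp ξ).2.1 hv)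
    exact hW.isOpen y v hvy
  · refine fun h => (hp a).2.2.2.2.2 (sUnion_mono ?_ h)
    rcases hba.lt_or_eq with hba | rfl
    · exact subset_union_of_subset_right
        (subset_biUnion_of_mem (u := fun η => (p η).2) (mem_Iio.2 hba)) _
    · exact subset_union_left

end Saturated

/-- For any Hausdorff `X` and infinite `κ`: if `L(X) ≤ κ`, `ψ(X) ≤ κ` and `F(X) ≤ κ`,
then `|X| ≤ 2^κ`. -/
theorem statement5 {X : Type u} [TopologicalSpace X] [T2Space X] {κ : Cardinal.{u}}
    (hκ : ℵ₀ ≤ κ)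
    (hL : LindelofLE (Set.univ : Set X) κ)
    (hψ : ∀ x : X, ∃ U : Set (Set X), (∀ u ∈ U, IsOpen u) ∧ #U ≤ κ ∧ ⋂₀ U = {x})
    (hF : ∀ (α : Type u) [LinearOrder α] [WellFoundedLT α] (f : α → X),
      IsFreeSequence f → #α ≤ κ) :
    #X ≤ 2 ^ κ := by
  rcases isEmpty_or_nonempty X with hX | hX
  · simp
  obtain ⟨W, hW⟩ := exists_isClosedPseudobase hκ hL hψ
  obtain ⟨A, hAκ, hA⟩ := hW.exists_isSaturated hκ
  obtain rfl : A = Set.univ := by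
    by_contra hAX
    obtain ⟨z, hz⟩ := (ne_univ_iff_exists_notMem A).1 hAX
    obtain ⟨f, hf⟩ := hA.exists_isFreeSequence hW hκ hL hz _ mk_Iio_succ_ord_toType_le
    have := hF _ f hf
    rw [mk_toType, card_ord] at this
    exact (Order.lt_succ_of_not_isMax (not_isMax κ)).not_ge this
  rwa [mk_univ] at hAκ
end

section
/- (Arhangel'skii) Every first-countable Lindelöf Hausdorff space has cardinality at most 2^{ℵ₀}. -/
/-!
Pick for each point `x` open neighbourhoods `U x n` with `⋂ n, U x n = {x}`. A recursion of
length `ω₁` produces a set `Y` with `#Y ≤ 𝔠` that, for each countable `C ⊆ Y`, contains the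
closure of `C` and, if the family `{U x n | x ∈ C}` does not cover `X`, a point outside its union;
the cardinal bound holds because closures of sets of size `≤ 𝔠` have size `≤ 𝔠 ^ ℵ₀ = 𝔠`, and
regularity of `ω₁` puts every countable subset of `Y` into a single stage. By first countability
`Y` is closed, hence Lindelöf. If some `p ∉ Y`, the sets `U y n` with `y ∈ Y`, `p ∉ U y n` cover
`Y`, so countably many of them do, which contradicts the point of `Y` chosen outside their union.
-/

open Cardinal Set Filter Topology

universe u

namespace Cardinal

open Ordinal

variable {α : Type u}

noncomputable def closingOff (Φ : Set α → Set α) : Ordinal.{u} → Set α :=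
  wellFounded_lt.fix fun o A => Φ (⋃ (o') (h : o' < o), A o' h)

theorem closingOff_eq (Φ : Set α → Set α) (o : Ordinal.{u}) :
    closingOff Φ o = Φ (⋃ o' < o, closingOff Φ o') :=
  wellFounded_lt.fix_eq _ o

theorem mk_closingOff_le {Φ : Set α → Set α} {κ : Cardinal.{u}} (hκ : ℵ₀ ≤ κ)
    (hΦ : ∀ B : Set α, #B ≤ κ → #(Φ B) ≤ κ) {o : Ordinal.{u}} (ho : o.card ≤ κ) :
    #(closingOff Φ o) ≤ κ := by
  induction o using WellFoundedLT.induction with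
  | ind o ih =>
    rw [closingOff_eq]
    exact hΦ _ <| mk_biUnion_le_of_le ho hκ _ fun o' h => ih o' h ((card_le_card h.le).trans ho)

theorem exists_countably_closed {κ : Cardinal.{u}} (hκ : ℵ₁ ≤ κ) {Φ : Set α → Set α}
    (hmono : Monotone Φ) (hΦ : ∀ B : Set α, #B ≤ κ → #(Φ B) ≤ κ) :
    ∃ Y : Set α, #Y ≤ κ ∧ ∀ C ⊆ Y, C.Countable → Φ C ⊆ Y := by
  have hκ₀ : ℵ₀ ≤ κ := aleph0_lt_aleph_one.le.trans hκ
  have hω₁ : (ω₁ : Ordinal.{u}).card ≤ κ := (card_omega 1).trans_le hκ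
  refine ⟨⋃ o < ω₁, closingOff Φ o, mk_biUnion_le_of_le hω₁ hκ₀ _ fun o ho =>
    mk_closingOff_le hκ₀ hΦ ((card_le_card ho.le).trans hω₁), fun C hCY hC => ?_⟩
  have : Countable C := hC.to_subtype
  choose o ho hmem using fun c : C => mem_iUnion₂.1 (hCY c.2)
  set s := ⨆ c, o c + 1
  have hs : s < ω₁ := iSup_lt_omega_one fun c => (isSuccLimit_omega 1).add_one_lt (ho c)
  have hC : C ⊆ ⋃ o' < s, closingOff Φ o' := fun c hc =>
    mem_iUnion₂.2 ⟨o ⟨c, hc⟩, (lt_add_one _).trans_le (Ordinal.le_iSup _ _), hmem _⟩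
  calc Φ C ⊆ closingOff Φ s := (closingOff_eq Φ s).symm ▸ hmono hC
    _ ⊆ _ := subset_iUnion₂ (s := fun o _ => closingOff Φ o) s hs

end Cardinal

theorem mk_nat_arrow_le_continuum {β : Type u} (h : #β ≤ 𝔠) : #(ℕ → β) ≤ 𝔠 := by
  rw [mk_arrow, lift_uzero, mk_nat, lift_aleph0, ← continuum_power_aleph0]
  exact power_le_power_right h

section Topology

variable {X : Type u} [TopologicalSpace X]

theorem mk_closure_le_mk_nat_arrow [FrechetUrysohnSpace X] [T2Space X] (s : Set X) :
    #(closure s) ≤ #(ℕ → s) := by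
  choose u hu hlim using fun x : closure s => mem_closure_iff_seq_limit.1 x.2
  refine mk_le_of_injective (f := fun x n => ⟨u x n, hu x n⟩) fun x y hxy => Subtype.ext ?_
  have : u x = u y := funext fun n => congrArg Subtype.val (congrFun hxy n)
  exact tendsto_nhds_unique (hlim x) (this ▸ hlim y)

theorem exists_isOpen_seq_iInter_eq_singleton [FirstCountableTopology X] [T1Space X] (x : X) :
    ∃ U : ℕ → Set X, (∀ n, x ∈ U n ∧ IsOpen (U n)) ∧ ⋂ n, U n = {x} := by
  obtain ⟨U, hU, hbasis⟩ := (nhds_basis_opens x).exists_antitone_subbasis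
  exact ⟨U, hU, by simpa using biInter_basis_nhds hbasis.toHasBasis⟩

theorem isClosed_of_closure_subset_of_countable [FrechetUrysohnSpace X] {Y : Set X}
    (hY : ∀ C ⊆ Y, C.Countable → closure C ⊆ Y) : IsClosed Y := by
  refine isClosed_of_closure_subset fun y hy => ?_
  obtain ⟨u, hu, hlim⟩ := mem_closure_iff_seq_limit.1 hy
  exact hY _ (range_subset_iff.2 hu) (countable_range u)
    (mem_closure_of_tendsto hlim (.of_forall mem_range_self))

end Topology

noncomputable def outsidePoint {X : Type u} [Nonempty X] (V : ℕ → Set X) : X :=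
  Classical.epsilon fun q => q ∉ ⋃ n, V n

theorem outsidePoint_notMem {X : Type u} [Nonempty X] {V : ℕ → Set X}
    (h : ∃ q, q ∉ ⋃ n, V n) : outsidePoint V ∉ ⋃ n, V n :=
  Classical.epsilon_spec h

section Arhangelskii

variable {X : Type u} [TopologicalSpace X] [Nonempty X] (U : X → ℕ → Set X)

/- The base point keeps the sets closed off under this step nonempty, so that their Lindelöf
subcovers can be indexed by `ℕ`. -/
noncomputable def arhangelskiiStep (B : Set X) : Set X :=
  insert (Classical.arbitrary X)
    (closure B ∪ range fun g : ℕ → B × ℕ => outsidePoint fun n => U (g n).1 (g n).2)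

theorem closure_subset_arhangelskiiStep (B : Set X) : closure B ⊆ arhangelskiiStep U B :=
  subset_union_left.trans (subset_insert _ _)

theorem arhangelskiiStep_mono : Monotone (arhangelskiiStep U) := by
  intro B B' h
  refine insert_subset_insert (union_subset_union (closure_mono h) ?_)
  rintro _ ⟨g, rfl⟩
  exact ⟨fun n => (inclusion h (g n).1, (g n).2), rfl⟩

theorem mk_arhangelskiiStep_le [FrechetUrysohnSpace X] [T2Space X] {B : Set X} (hB : #B ≤ 𝔠) :
    #(arhangelskiiStep U B) ≤ 𝔠 := by
  have hclosure : #(closure B) ≤ 𝔠 :=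
    (mk_closure_le_mk_nat_arrow B).trans (mk_nat_arrow_le_continuum hB)
  have hindex : #(B × ℕ) ≤ 𝔠 := by
    rw [mk_prod, lift_uzero, mk_nat, lift_aleph0]
    exact mul_le_of_le aleph0_le_continuum hB aleph0_le_continuum
  refine mk_insert_le.trans <| add_le_of_le aleph0_le_continuum ?_
    (one_lt_aleph0.le.trans aleph0_le_continuum)
  exact (mk_union_le _ _).trans <| add_le_of_le aleph0_le_continuum hclosure <|
    mk_range_le.trans (mk_nat_arrow_le_continuum hindex)

variable {U} in
theorem eq_univ_of_arhangelskiiStep_subset [LindelofSpace X]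
    (hU : ∀ x n, x ∈ U x n ∧ IsOpen (U x n)) (hsep : ∀ x, ⋂ n, U x n = {x}) {Y : Set X}
    (hYc : IsClosed Y) (hY : ∀ C ⊆ Y, C.Countable → arhangelskiiStep U C ⊆ Y) :
    Y = Set.univ := by
  refine eq_univ_of_forall fun p => by_contra fun hp => ?_
  have hpU : ∀ y : Y, ∃ n, p ∉ U y n := fun y => by
    have : p ∉ ⋂ n, U y n := by
      rw [hsep]
      rintro rfl
      exact hp y.2
    simpa using this
  choose n hn using hpU
  have : Nonempty Y := ⟨_, hY ∅ (empty_subset _) countable_empty (mem_insert _ _)⟩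
  obtain ⟨f, hf⟩ := hYc.isLindelof.indexed_countable_subcover (fun y : Y => U y (n y))
    (fun y => (hU y _).2) fun y hy => mem_iUnion.2 ⟨⟨y, hy⟩, (hU y _).1⟩
  have hout : (outsidePoint fun k => U (f k) (n (f k))) ∉ ⋃ k, U (f k) (n (f k)) :=
    outsidePoint_notMem ⟨p, by simpa using fun k => hn (f k)⟩
  have hfY : range (fun k => (f k : X)) ⊆ Y := range_subset_iff.2 fun k => (f k).2
  exact hout <| hf <| hY _ hfY (countable_range _) <|
    mem_insert_of_mem _ (Or.inr ⟨fun k => (⟨f k, mem_range_self k⟩, n (f k)), rfl⟩)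

end Arhangelskii

/-- (Arhangel'skii) Every first-countable Lindelöf Hausdorff space has cardinality at
most `2^ℵ₀`. -/
theorem statement7 {X : Type*} [TopologicalSpace X] [T2Space X]
    [FirstCountableTopology X] [LindelofSpace X] :
    #X ≤ 2 ^ ℵ₀ := by
  rcases isEmpty_or_nonempty X with _ | _
  · simp
  choose U hU hsep using exists_isOpen_seq_iInter_eq_singleton (X := X)
  obtain ⟨Y, hYcard, hYstep⟩ := exists_countably_closed aleph_one_le_continuum
    (arhangelskiiStep_mono U) fun _ => mk_arhangelskiiStep_le U
  have hYc : IsClosed Y := isClosed_of_closure_subset_of_countable fun C hCY hC =>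
    (closure_subset_arhangelskiiStep U C).trans (hYstep C hCY hC)
  rw [two_power_aleph0, ← mk_univ, ← eq_univ_of_arhangelskiiStep_subset hU hsep hYc hYstep]
  exact hYcard
end
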